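/- Conversely, if a measurement process M = (M_x) on a GPT system A satisfies, for every state ρ and every ensemble (σ_{x,y}) of M ρ, the recovery identity M_x(∑_{x'} σ_{x',y}) = σ_{x,y}, then M is strongly repeatable: for every state ρ, every x, and every 0 ≤ σ ≤ M_x ρ one has M_x σ = σ. -/

import Mathlib

open Finset

/-- converse to Statement 8: if a measurement process `(M x)` satisfies the
ensemble-recovery identity for every state and every ensemble of the post-measurement
state, then it is strongly repeatable. -/
theorem stmt9 (V : Type*) [AddCommGroup V] [Module ℝ V]
    (C : Set V) (u : V →ₗ[ℝ] ℝ)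
    (X : Type*) [Fintype X] [DecidableEq X]
    (M : X → V →ₗ[ℝ] V)
    (hMpos : ∀ x, ∀ v ∈ C, M x v ∈ C)
    (hMnorm : ∀ v : V, ∑ x, u (M x v) = u v)
    -- ensemble-recovery hypothesis
    (hrec : ∀ ρ ∈ C, u ρ = 1 →
      ∀ (Y : Type) [Fintype Y], ∀ σ : X → Y → V,
        (∀ x y, σ x y ∈ C) → (∀ x, ∑ y, σ x y = M x ρ) →
        ∀ x y, M x (∑ x', σ x' y) = σ x y) :
    -- strong repeatability
    ∀ ρ ∈ C, u ρ = 1 → ∀ x, ∀ τ ∈ C, M x ρ - τ ∈ C → M x τ = τ := by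
  classical
  intro ρ hρ hρ1 x τ hτ hτ'
  by_cases hX : ∀ w : X, w = x
  · -- degenerate case : `X = {x}`
    have hcard : (Finset.univ : Finset X).card = 1 := by
      rw [Finset.card_eq_one]
      exact ⟨x, Finset.eq_singleton_iff_unique_mem.mpr
        ⟨Finset.mem_univ x, fun y _ => hX y⟩⟩
    have h := hrec ρ hρ hρ1 Bool (fun _ y => if y = true then τ else M x ρ - τ)
      (by
        intro x' y
        by_cases hy : y = true
        · rw [if_pos hy]; exact hτ
        · rw [if_neg hy]; exact hτ')
      (by
        intro x'
        simp only [Fintype.sum_bool, if_pos (rfl : (true : Bool) = true),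
          if_neg Bool.false_ne_true, hX x']
        exact add_sub_cancel _ _)
      x true
    simp only [if_pos (rfl : (true : Bool) = true)] at h
    rw [Finset.sum_const, hcard, one_nsmul] at h
    exact h
  · -- main case : there is `w₀ ≠ x`
    push_neg at hX
    obtain ⟨w₀, hw₀⟩ := hX
    set n := Fintype.card X with hn
    set e := Fintype.equivFin X with he
    -- Step 1 : trivial one-element ensemble
    have h1 : ∀ z, M z (∑ w, M w ρ) = M z ρ := by
      intro z
      have h := hrec ρ hρ hρ1 (Fin 1) (fun x' _ => M x' ρ)
        (fun x' _ => hMpos x' ρ hρ)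
        (fun x' => by simp)
        z 0
      exact h
    -- splitting a sum of an `ite` over `X`
    have sum_ite_split : ∀ (P : V) (f : X → V),
        (∑ x' : X, if x' = x then P else f x')
          = P + ∑ x' ∈ Finset.univ.erase x, f x' := by
      intro P f
      rw [← Finset.add_sum_erase Finset.univ _ (Finset.mem_univ x), if_pos rfl]
      congr 1
      exact Finset.sum_congr rfl fun y hy => if_neg (Finset.mem_erase.mp hy).1
    -- cancellation helper
    have cancel : ∀ (a b R : V), M w₀ (a + R) = M w₀ (b + R) → M w₀ a = M w₀ b := by
      intro a b R h
      rw [map_add, map_add] at h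
      exact add_right_cancel h
    -- master lemma : recovery for an ensemble whose column `x` is permuted by `sw`
    have master : ∀ (Y : Type) [Fintype Y] (g : Y → V), (∀ y, g y ∈ C) →
        (∑ y, g y = ∑ w, M w ρ) → ∀ (sw : Y ≃ Y) (z : X) (y : Y),
        M z (∑ x', if x' = x then M x (g (sw y)) else M x' (g y))
          = if z = x then M x (g (sw y)) else M z (g y) := by
      intro Y _ g hgC hgS sw z y
      refine hrec ρ hρ hρ1 Y
        (fun x' y => if x' = x then M x (g (sw y)) else M x' (g y)) ?_ ?_ z y
      · intro x' y'
        by_cases h : x' = x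
        · rw [if_pos h]; exact hMpos _ _ (hgC _)
        · rw [if_neg h]; exact hMpos _ _ (hgC _)
      · intro x'
        by_cases h : x' = x
        · simp only [h, eq_self_iff_true, if_true]
          rw [← map_sum]
          rw [show (∑ y', g (sw y')) = ∑ y', g y' from
            Fintype.sum_equiv sw _ _ (fun y' => rfl)]
          rw [hgS]
          exact h1 x
        · simp only [if_neg h]
          rw [← map_sum, hgS]
          exact h1 x'
    -- canonical ensemble over `Fin n`
    have hgcS : (∑ i : Fin n, M (e.symm i) ρ) = ∑ w, M w ρ :=
      Fintype.sum_equiv e.symm _ _ (fun i => rfl)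
    have A := master (Fin n) (fun i => M (e.symm i) ρ)
      (fun i => hMpos _ _ hρ) hgcS (Equiv.refl _) w₀ (e x)
    have B := master (Fin n) (fun i => M (e.symm i) ρ)
      (fun i => hMpos _ _ hρ) hgcS (Equiv.swap (e x) (e w₀)) w₀ (e x)
    rw [sum_ite_split] at A B
    simp only [Equiv.refl_apply, Equiv.swap_apply_left, Equiv.symm_apply_apply,
      if_neg hw₀] at A B
    have hIV : M w₀ (M x (M x ρ)) = M w₀ (M x (M w₀ ρ)) :=
      cancel _ _ _ (A.trans B.symm)
    -- τ-refined ensemble over `Option (Fin n)`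
    have hgeC : ∀ y : Option (Fin n),
        (Option.elim y (M x ρ - τ)
          (fun i => if e.symm i = x then τ else M (e.symm i) ρ)) ∈ C := by
      rintro (_ | i)
      · exact hτ'
      · show (if e.symm i = x then τ else M (e.symm i) ρ) ∈ C
        by_cases h : e.symm i = x
        · rw [if_pos h]; exact hτ
        · rw [if_neg h]; exact hMpos _ _ hρ
    have hgeS : (∑ y : Option (Fin n), Option.elim y (M x ρ - τ)
        (fun i => if e.symm i = x then τ else M (e.symm i) ρ)) = ∑ w, M w ρ := by
      rw [Fintype.sum_option]
      rw [show (∑ i : Fin n, Option.elim (some i) (M x ρ - τ)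
            (fun i => if e.symm i = x then τ else M (e.symm i) ρ))
          = ∑ w : X, if w = x then τ else M w ρ from
        Fintype.sum_equiv e.symm _ _ (fun i => rfl)]
      rw [sum_ite_split τ (fun w => M w ρ)]
      rw [← Finset.add_sum_erase Finset.univ (fun w => M w ρ) (Finset.mem_univ x)]
      show Option.elim none (M x ρ - τ) _ + (τ + _) = M x ρ + _
      show M x ρ - τ + (τ + _) = M x ρ + _
      rw [← add_assoc, sub_add_cancel]
    have C0 := master (Option (Fin n))
      (fun y => Option.elim y (M x ρ - τ)
        (fun i => if e.symm i = x then τ else M (e.symm i) ρ))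
      hgeC hgeS (Equiv.refl _) w₀ (some (e x))
    have C1 := master (Option (Fin n))
      (fun y => Option.elim y (M x ρ - τ)
        (fun i => if e.symm i = x then τ else M (e.symm i) ρ))
      hgeC hgeS (Equiv.swap (some (e x)) (some (e w₀))) w₀ (some (e x))
    have D0 := master (Option (Fin n))
      (fun y => Option.elim y (M x ρ - τ)
        (fun i => if e.symm i = x then τ else M (e.symm i) ρ))
      hgeC hgeS (Equiv.refl _) w₀ none
    have D1 := master (Option (Fin n))
      (fun y => Option.elim y (M x ρ - τ)
        (fun i => if e.symm i = x then τ else M (e.symm i) ρ))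
      hgeC hgeS (Equiv.swap none (some (e w₀))) w₀ none
    rw [sum_ite_split] at C0 C1 D0 D1
    simp only [Equiv.refl_apply, Equiv.swap_apply_left, Option.elim,
      Equiv.symm_apply_apply, eq_self_iff_true, if_true, if_neg hw₀] at C0 C1 D0 D1
    have EqI : M w₀ (M x τ) = M w₀ (M x (M w₀ ρ)) :=
      cancel _ _ _ (C0.trans C1.symm)
    have EqII : M w₀ (M x (M x ρ - τ)) = M w₀ (M x (M w₀ ρ)) :=
      cancel _ _ _ (D0.trans D1.symm)
    -- combine everything : the vector below is zero
    have big : M w₀ (M x τ) + M w₀ (M x (M x ρ - τ)) = M w₀ (M x (M w₀ ρ)) := by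
      calc M w₀ (M x τ) + M w₀ (M x (M x ρ - τ))
          = M w₀ (M x (τ + (M x ρ - τ))) := by rw [map_add, map_add]
        _ = M w₀ (M x (M x ρ)) := by
            rw [add_sub_cancel τ (M x ρ)]
        _ = M w₀ (M x (M w₀ ρ)) := hIV
    rw [EqI, EqII] at big
    have hzero : M w₀ (M x (M w₀ ρ)) = 0 := by
      have h2 : M w₀ (M x (M w₀ ρ)) + M w₀ (M x (M w₀ ρ))
          = M w₀ (M x (M w₀ ρ)) + 0 := by rw [add_zero]; exact big
      exact add_left_cancel h2
    have h0C : (0 : V) ∈ C := by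
      have hm := hMpos w₀ _ (hMpos x _ (hMpos w₀ ρ hρ))
      rwa [hzero] at hm
    -- the intended two-element ensemble, now that `0 ∈ C`
    have final := hrec ρ hρ hρ1 Bool
      (fun x' y => if x' = x then (if y = true then τ else M x ρ - τ)
        else (if y = true then 0 else M x' ρ))
      (by
        intro x' y
        split_ifs
        exacts [hτ, hτ', h0C, hMpos x' ρ hρ])
      (by
        intro x'
        by_cases h : x' = x
        · simp only [Fintype.sum_bool, if_pos h,
            if_pos (rfl : (true : Bool) = true), if_neg Bool.false_ne_true, if_true,
            if_false, h]
          exact add_sub_cancel _ _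
        · simp only [Fintype.sum_bool, if_neg h,
            if_pos (rfl : (true : Bool) = true), if_neg Bool.false_ne_true, if_true,
            if_false]
          rw [zero_add])
      x true
    simp only [if_pos (rfl : (true : Bool) = true), eq_self_iff_true, if_true] at final
    rw [sum_ite_split τ (fun _ => (0 : V))] at final
    rw [Finset.sum_const_zero, add_zero] at final
    exact final
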